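/- arXiv:1210.0736 — 4 statements merged into one kernel-verified Lean document; each statement's English description precedes it below -/
import Mathlib

section
/- For any four random variables X₁, X₂, X₃, X₄ each taking values in {-1, 1}, the quantity X₁X₃ + X₂X₃ + X₂X₄ − X₁X₄ always equals ±2, and hence E[X₁X₃] + E[X₂X₃] + E[X₂X₄] − E[X₁X₄] ≤ 2 (CHSH/Bell inequality). -/
/-!
Writing the CHSH combination as `(a + b) c + (b - a) d`, for `a, b = ±1` exactly one of
`a + b` and `b - a` vanishes and the other is `±2`; as `c, d = ±1`, the combination is `±2`
pointwise. By linearity of the integral its expectation is the sum of the four correlations,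
and the expectation of a function bounded by `2` in absolute value is at most `2`.
-/

open MeasureTheory

lemma chsh_combination_eq_two_or_neg_two {a b c d : ℝ} (ha : a = -1 ∨ a = 1)
    (hb : b = -1 ∨ b = 1) (hc : c = -1 ∨ c = 1) (hd : d = -1 ∨ d = 1) :
    a * c + b * c + b * d - a * d = 2 ∨ a * c + b * c + b * d - a * d = -2 := by
  rcases ha with rfl | rfl <;> rcases hb with rfl | rfl <;>
    rcases hc with rfl | rfl <;> rcases hd with rfl | rfl <;> norm_num

lemma integrable_mul_of_eq_neg_one_or_one {Ω : Type*} [MeasurableSpace Ω] {μ : Measure Ω}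
    [IsFiniteMeasure μ] {f g : Ω → ℝ} (hf : Measurable f) (hg : Measurable g)
    (hf₁ : ∀ ω, f ω = -1 ∨ f ω = 1) (hg₁ : ∀ ω, g ω = -1 ∨ g ω = 1) :
    Integrable (fun ω => f ω * g ω) μ := by
  refine .of_bound (hf.mul hg).aestronglyMeasurable 1 (.of_forall fun ω => ?_)
  rcases hf₁ ω with h | h <;> rcases hg₁ ω with h' | h' <;> simp [h, h']

/-- CHSH/Bell inequality for classical random variables taking values ±1. -/
theorem chsh_bell_inequality
    {Ω : Type*} [MeasurableSpace Ω] (μ : Measure Ω) [IsProbabilityMeasure μ]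
    (X₁ X₂ X₃ X₄ : Ω → ℝ)
    (hm₁ : Measurable X₁) (hm₂ : Measurable X₂)
    (hm₃ : Measurable X₃) (hm₄ : Measurable X₄)
    (h₁ : ∀ ω, X₁ ω = -1 ∨ X₁ ω = 1) (h₂ : ∀ ω, X₂ ω = -1 ∨ X₂ ω = 1)
    (h₃ : ∀ ω, X₃ ω = -1 ∨ X₃ ω = 1) (h₄ : ∀ ω, X₄ ω = -1 ∨ X₄ ω = 1) :
    (∀ ω, X₁ ω * X₃ ω + X₂ ω * X₃ ω + X₂ ω * X₄ ω - X₁ ω * X₄ ω = 2 ∨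
          X₁ ω * X₃ ω + X₂ ω * X₃ ω + X₂ ω * X₄ ω - X₁ ω * X₄ ω = -2) ∧
    (∫ ω, X₁ ω * X₃ ω ∂μ) + (∫ ω, X₂ ω * X₃ ω ∂μ) + (∫ ω, X₂ ω * X₄ ω ∂μ)
      - (∫ ω, X₁ ω * X₄ ω ∂μ) ≤ 2 := by
  have hpointwise := fun ω => chsh_combination_eq_two_or_neg_two (h₁ ω) (h₂ ω) (h₃ ω) (h₄ ω)
  refine ⟨hpointwise, ?_⟩
  have i₁₃ := integrable_mul_of_eq_neg_one_or_one (μ := μ) hm₁ hm₃ h₁ h₃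
  have i₂₃ := integrable_mul_of_eq_neg_one_or_one (μ := μ) hm₂ hm₃ h₂ h₃
  have i₂₄ := integrable_mul_of_eq_neg_one_or_one (μ := μ) hm₂ hm₄ h₂ h₄
  have i₁₄ := integrable_mul_of_eq_neg_one_or_one (μ := μ) hm₁ hm₄ h₁ h₄
  have hbound : ∀ ω, ‖X₁ ω * X₃ ω + X₂ ω * X₃ ω + X₂ ω * X₄ ω - X₁ ω * X₄ ω‖ ≤ 2 := fun ω => by
    rcases hpointwise ω with h | h <;> simp [h]
  calc (∫ ω, X₁ ω * X₃ ω ∂μ) + (∫ ω, X₂ ω * X₃ ω ∂μ) + (∫ ω, X₂ ω * X₄ ω ∂μ)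
        - (∫ ω, X₁ ω * X₄ ω ∂μ)
      = ∫ ω, X₁ ω * X₃ ω + X₂ ω * X₃ ω + X₂ ω * X₄ ω - X₁ ω * X₄ ω ∂μ := by
        rw [integral_sub ?_ i₁₄, integral_add ?_ i₂₄, integral_add i₁₃ i₂₃]
        exacts [i₁₃.add i₂₃, (i₁₃.add i₂₃).add i₂₄]
    _ ≤ ‖∫ ω, X₁ ω * X₃ ω + X₂ ω * X₃ ω + X₂ ω * X₄ ω - X₁ ω * X₄ ω ∂μ‖ := Real.le_norm_self _
    _ ≤ 2 * μ.real Set.univ := norm_integral_le_of_norm_le_const (.of_forall hbound)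
    _ = 2 := by simp
end

section
/- (Tsirelson's inequality) Let A₁, A₂, B₁, B₂ be Hermitian operators on a finite-dimensional Hilbert space with A_i² = I and B_j² = I, where each A_i commutes with each B_j. Then for any unit vector |ψ⟩, ⟨ψ|A₁B₁ + A₂B₁ + A₂B₂ − A₁B₂|ψ⟩ ≤ 2√2. -/
/-!
In any star-ordered `ℝ`-algebra, `2√2 • 1 - (A₀B₀ + A₀B₁ + A₁B₀ - A₁B₁) = (P² + Q²)/√2` with
`P = (A₁ + A₀)/√2 - B₀` and `Q = (A₁ - A₀)/√2 + B₁` self-adjoint (`tsirelson_inequality`).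
Complex matrices with the Loewner order form such an algebra, and the expectation in a unit
vector is monotone for that order and sends `c • 1` to `c`.
-/

open Matrix Complex
open scoped MatrixOrder

theorem Matrix.re_dotProduct_mulVec_le_of_le {n : Type*} [Fintype n] {M N : Matrix n n ℂ}
    (h : M ≤ N) (ψ : n → ℂ) : (star ψ ⬝ᵥ M *ᵥ ψ).re ≤ (star ψ ⬝ᵥ N *ᵥ ψ).re := by
  have hnonneg := (le_iff.mp h).re_dotProduct_nonneg ψ
  rw [sub_mulVec, dotProduct_sub, RCLike.re_to_complex, sub_re] at hnonneg
  linarith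

theorem Matrix.re_dotProduct_smul_one_mulVec {n : Type*} [Fintype n] [DecidableEq n] (c : ℝ)
    (ψ : n → ℂ) : (star ψ ⬝ᵥ (c • (1 : Matrix n n ℂ)) *ᵥ ψ).re = c * (star ψ ⬝ᵥ ψ).re := by
  rw [smul_mulVec, one_mulVec, dotProduct_smul, Complex.smul_re, smul_eq_mul]

/-- Tsirelson's inequality: for Hermitian operators A₁, A₂, B₁, B₂ squaring to the
identity, with every Aᵢ commuting with every Bⱼ, the CHSH expectation in any unit
state is bounded by 2√2. -/
theorem tsirelson_inequality_matrix
    {n : ℕ} (A₁ A₂ B₁ B₂ : Matrix (Fin n) (Fin n) ℂ)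
    (hA₁ : A₁.IsHermitian) (hA₂ : A₂.IsHermitian)
    (hB₁ : B₁.IsHermitian) (hB₂ : B₂.IsHermitian)
    (hA₁sq : A₁ * A₁ = 1) (hA₂sq : A₂ * A₂ = 1)
    (hB₁sq : B₁ * B₁ = 1) (hB₂sq : B₂ * B₂ = 1)
    (hc₁₁ : A₁ * B₁ = B₁ * A₁) (hc₁₂ : A₁ * B₂ = B₂ * A₁)
    (hc₂₁ : A₂ * B₁ = B₁ * A₂) (hc₂₂ : A₂ * B₂ = B₂ * A₂)
    (ψ : Fin n → ℂ) (hψ : ∑ i, starRingEnd ℂ (ψ i) * ψ i = 1) :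
    (∑ i, starRingEnd ℂ (ψ i) *
        ((A₁ * B₁ + A₂ * B₁ + A₂ * B₂ - A₁ * B₂).mulVec ψ) i).re
      ≤ 2 * Real.sqrt 2 := by
  have hCHSH : IsCHSHTuple A₂ A₁ B₁ B₂ :=
    ⟨(sq A₂).trans hA₂sq, (sq A₁).trans hA₁sq, (sq B₁).trans hB₁sq, (sq B₂).trans hB₂sq,
      hA₂, hA₁, hB₁, hB₂, hc₂₁, hc₂₂, hc₁₁, hc₁₂⟩
  have hψ' : star ψ ⬝ᵥ ψ = 1 := hψ
  have hsqrt : √2 ^ 3 = 2 * √2 := by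
    rw [pow_succ, sq, Real.mul_self_sqrt zero_le_two]
  calc (star ψ ⬝ᵥ (A₁ * B₁ + A₂ * B₁ + A₂ * B₂ - A₁ * B₂) *ᵥ ψ).re
      = (star ψ ⬝ᵥ (A₂ * B₁ + A₂ * B₂ + A₁ * B₁ - A₁ * B₂) *ᵥ ψ).re := by congr 4; abel
    _ ≤ (star ψ ⬝ᵥ (√2 ^ 3 • (1 : Matrix (Fin n) (Fin n) ℂ)) *ᵥ ψ).re :=
      re_dotProduct_mulVec_le_of_le (tsirelson_inequality _ _ _ _ hCHSH) ψ
    _ = 2 * √2 := by rw [re_dotProduct_smul_one_mulVec, hψ', one_re, mul_one, hsqrt]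
end

section
/- The CHSH operator C = A₁B₁ + A₂B₁ + A₂B₂ − A₁B₂, where A_i² = B_j² = I and each A_i commutes with each B_j, satisfies C² = 4I + [A₁, A₂][B₁, B₂], and consequently ‖C‖ ≤ 2√2. -/
/-! Expanding `C * C` and moving every `Bⱼ` past every `Aᵢ`, the squares `Aᵢ² = Bⱼ² = 1` collapse
the sixteen terms to `4 + [A₁, A₂][B₁, B₂]`. In a C⋆-algebra a self-adjoint involution is unitary,
so it has norm at most `1` and each commutator has norm at most `2`. Since `C` is self-adjoint, the
C⋆-identity gives `‖C‖² = ‖C * C‖ ≤ 4 + 2 * 2 = 8`. -/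

def chshOperator {R : Type*} [Ring R] (a₁ a₂ b₁ b₂ : R) : R :=
  a₁ * b₁ + a₂ * b₁ + a₂ * b₂ - a₁ * b₂

section Ring

variable {R : Type*} [Ring R] {a₁ a₂ b₁ b₂ : R}

theorem chshOperator_mul_self (ha₁ : a₁ * a₁ = 1) (ha₂ : a₂ * a₂ = 1)
    (hb₁ : b₁ * b₁ = 1) (hb₂ : b₂ * b₂ = 1)
    (h₁₁ : Commute a₁ b₁) (h₁₂ : Commute a₁ b₂) (h₂₁ : Commute a₂ b₁) (h₂₂ : Commute a₂ b₂) :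
    chshOperator a₁ a₂ b₁ b₂ * chshOperator a₁ a₂ b₁ b₂ =
      4 + (a₁ * a₂ - a₂ * a₁) * (b₁ * b₂ - b₂ * b₁) := by
  have ha₁_cancel (x : R) : a₁ * (a₁ * x) = x := by rw [← mul_assoc, ha₁, one_mul]
  have ha₂_cancel (x : R) : a₂ * (a₂ * x) = x := by rw [← mul_assoc, ha₂, one_mul]
  simp only [chshOperator, add_mul, mul_add, sub_mul, mul_sub, mul_assoc, h₁₁.symm.left_comm,
    h₁₂.symm.left_comm, h₂₁.symm.left_comm, h₂₂.symm.left_comm, ha₁, ha₂, ha₁_cancel, ha₂_cancel,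
    hb₁, hb₂, mul_one]
  rw [show (4 : R) = 1 + 1 + 1 + 1 by norm_num]
  abel

theorem IsSelfAdjoint.chshOperator [StarRing R] (ha₁ : IsSelfAdjoint a₁) (ha₂ : IsSelfAdjoint a₂)
    (hb₁ : IsSelfAdjoint b₁) (hb₂ : IsSelfAdjoint b₂)
    (h₁₁ : Commute a₁ b₁) (h₁₂ : Commute a₁ b₂) (h₂₁ : Commute a₂ b₁) (h₂₂ : Commute a₂ b₂) :
    IsSelfAdjoint (chshOperator a₁ a₂ b₁ b₂) := by
  rw [ha₁.commute_iff hb₁] at h₁₁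
  rw [ha₁.commute_iff hb₂] at h₁₂
  rw [ha₂.commute_iff hb₁] at h₂₁
  rw [ha₂.commute_iff hb₂] at h₂₂
  exact ((h₁₁.add h₂₁).add h₂₂).sub h₁₂

end Ring

theorem norm_commutator_le_two {R : Type*} [NormedRing R] {a b : R} (ha : ‖a‖ ≤ 1)
    (hb : ‖b‖ ≤ 1) : ‖a * b - b * a‖ ≤ 2 :=
  calc ‖a * b - b * a‖ ≤ ‖a‖ * ‖b‖ + ‖b‖ * ‖a‖ :=
        (norm_sub_le _ _).trans (add_le_add (norm_mul_le _ _) (norm_mul_le _ _))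
    _ ≤ 1 * 1 + 1 * 1 := by gcongr
    _ = 2 := by norm_num

section CStarRing

variable {E : Type*} [NormedRing E] [StarRing E] [CStarRing E]

theorem IsSelfAdjoint.norm_le_one_of_mul_self_eq_one {u : E} (hu : IsSelfAdjoint u)
    (h : u * u = 1) : ‖u‖ ≤ 1 := by
  nontriviality E
  have : u ∈ unitary E := Unitary.mem_iff.mpr ⟨by rwa [hu.star_eq], by rwa [hu.star_eq]⟩
  exact (CStarRing.norm_of_mem_unitary this).le

theorem norm_le_two_mul_sqrt_two_of_mul_self {c : E} (hc : IsSelfAdjoint c) {a₁ a₂ b₁ b₂ : E}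
    (ha₁ : ‖a₁‖ ≤ 1) (ha₂ : ‖a₂‖ ≤ 1) (hb₁ : ‖b₁‖ ≤ 1) (hb₂ : ‖b₂‖ ≤ 1)
    (h : c * c = 4 + (a₁ * a₂ - a₂ * a₁) * (b₁ * b₂ - b₂ * b₁)) : ‖c‖ ≤ 2 * √2 := by
  nontriviality E
  have hsq : ‖c‖ ^ 2 ≤ (2 * √2) ^ 2 :=
    calc ‖c‖ ^ 2 = ‖c * c‖ := hc.norm_mul_self.symm
      _ ≤ ‖(4 : E)‖ + ‖a₁ * a₂ - a₂ * a₁‖ * ‖b₁ * b₂ - b₂ * b₁‖ :=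
        h ▸ (norm_add_le _ _).trans (add_le_add_right (norm_mul_le _ _) _)
      _ ≤ 4 + 2 * 2 := by
        gcongr
        · exact (Nat.norm_cast_le 4).trans (by simp)
        · exact norm_commutator_le_two ha₁ ha₂
        · exact norm_commutator_le_two hb₁ hb₂
      _ = (2 * √2) ^ 2 := by rw [mul_pow, Real.sq_sqrt zero_le_two]; norm_num
  exact (pow_le_pow_iff_left₀ (norm_nonneg _) (by positivity) two_ne_zero).mp hsq

theorem norm_chshOperator_le {a₁ a₂ b₁ b₂ : E} (ha₁ : IsSelfAdjoint a₁) (ha₂ : IsSelfAdjoint a₂)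
    (hb₁ : IsSelfAdjoint b₁) (hb₂ : IsSelfAdjoint b₂)
    (ha₁sq : a₁ * a₁ = 1) (ha₂sq : a₂ * a₂ = 1) (hb₁sq : b₁ * b₁ = 1) (hb₂sq : b₂ * b₂ = 1)
    (h₁₁ : Commute a₁ b₁) (h₁₂ : Commute a₁ b₂) (h₂₁ : Commute a₂ b₁) (h₂₂ : Commute a₂ b₂) :
    ‖chshOperator a₁ a₂ b₁ b₂‖ ≤ 2 * √2 :=
  norm_le_two_mul_sqrt_two_of_mul_self (ha₁.chshOperator ha₂ hb₁ hb₂ h₁₁ h₁₂ h₂₁ h₂₂)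
    (ha₁.norm_le_one_of_mul_self_eq_one ha₁sq) (ha₂.norm_le_one_of_mul_self_eq_one ha₂sq)
    (hb₁.norm_le_one_of_mul_self_eq_one hb₁sq) (hb₂.norm_le_one_of_mul_self_eq_one hb₂sq)
    (chshOperator_mul_self ha₁sq ha₂sq hb₁sq hb₂sq h₁₁ h₁₂ h₂₁ h₂₂)

end CStarRing

/-- The CHSH operator C = A₁B₁ + A₂B₁ + A₂B₂ - A₁B₂ satisfies
C² = 4I + [A₁,A₂][B₁,B₂], and consequently its operator norm is at most 2√2. -/
theorem chsh_operator_sq_and_norm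
    {n : ℕ} (A₁ A₂ B₁ B₂ : Matrix (Fin n) (Fin n) ℂ)
    (hA₁ : A₁.IsHermitian) (hA₂ : A₂.IsHermitian)
    (hB₁ : B₁.IsHermitian) (hB₂ : B₂.IsHermitian)
    (hA₁sq : A₁ * A₁ = 1) (hA₂sq : A₂ * A₂ = 1)
    (hB₁sq : B₁ * B₁ = 1) (hB₂sq : B₂ * B₂ = 1)
    (hc₁₁ : A₁ * B₁ = B₁ * A₁) (hc₁₂ : A₁ * B₂ = B₂ * A₁)
    (hc₂₁ : A₂ * B₁ = B₁ * A₂) (hc₂₂ : A₂ * B₂ = B₂ * A₂)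
    (C : Matrix (Fin n) (Fin n) ℂ)
    (hC : C = A₁ * B₁ + A₂ * B₁ + A₂ * B₂ - A₁ * B₂) :
    C * C = (4 : ℂ) • 1 + (A₁ * A₂ - A₂ * A₁) * (B₁ * B₂ - B₂ * B₁) ∧
    ‖Matrix.toEuclideanCLM (𝕜 := ℂ) C‖ ≤ 2 * Real.sqrt 2 := by
  set f := Matrix.toEuclideanCLM (𝕜 := ℂ) (n := Fin n)
  have map_mul_self_eq_one {A : Matrix (Fin n) (Fin n) ℂ} (h : A * A = 1) : f A * f A = 1 := by
    rw [← map_mul, h, map_one]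
  have hfC : f C = chshOperator (f A₁) (f A₂) (f B₁) (f B₂) := by
    simp only [hC, chshOperator, map_add, map_sub, map_mul]
  constructor
  · rw [← Algebra.algebraMap_eq_smul_one, map_ofNat, hC]
    exact chshOperator_mul_self hA₁sq hA₂sq hB₁sq hB₂sq hc₁₁ hc₁₂ hc₂₁ hc₂₂
  · rw [hfC]
    exact norm_chshOperator_le (hA₁.isSelfAdjoint.map f) (hA₂.isSelfAdjoint.map f)
      (hB₁.isSelfAdjoint.map f) (hB₂.isSelfAdjoint.map f)
      (map_mul_self_eq_one hA₁sq) (map_mul_self_eq_one hA₂sq)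
      (map_mul_self_eq_one hB₁sq) (map_mul_self_eq_one hB₂sq)
      (Commute.map hc₁₁ f) (Commute.map hc₁₂ f) (Commute.map hc₂₁ f) (Commute.map hc₂₂ f)
end

section
/- Let |x⟩ be a unit vector, |ψ⟩ = α|x⟩ + β|y⟩ with |y⟩ a unit vector orthogonal to |x⟩ and α, β real with α² + β² = 1, α ≠ 0. Define the Hamiltonian H = |x⟩⟨x| + |ψ⟩⟨ψ|. Then exp(−iHt)|ψ⟩ = e^{−it}·(cos(αt)·|ψ⟩ − i·sin(αt)·|x⟩); in particular at time t = π/(2α), exp(−iHt)|ψ⟩ is, up to a global phase, equal to |x⟩. -/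
/-!
Since `⟪x, ψ⟫ = α` is real, `ψ + x` and `ψ - x` are eigenvectors of `H` with eigenvalues
`1 + α` and `1 - α`. Writing `ψ` as half their sum, `exp (-iHt)` multiplies the two halves by
`e^{-it} e^{∓iαt}`, which recombine to `e^{-it} (cos (αt) ψ - i sin (αt) x)`; at `αt = π/2`
the `ψ`-component vanishes.
-/

open scoped InnerProductSpace
open Complex

theorem NormedSpace.exp_apply_of_apply_eq_smul {E : Type*} [NormedAddCommGroup E]
    [NormedSpace ℂ E] [CompleteSpace E] {A : E →L[ℂ] E} {v : E} {c : ℂ} (h : A v = c • v) :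
    NormedSpace.exp A v = Complex.exp c • v := by
  have hpow (n : ℕ) : (A ^ n) v = c ^ n • v := by
    induction n with
    | zero => simp
    | succ n ih => rw [pow_succ, mul_apply_eq_comp, h, map_smul, ih, smul_smul, pow_succ']
  have hA := (NormedSpace.exp_series_hasSum_exp' (𝕂 := ℂ) A).mapL (ContinuousLinearMap.apply ℂ E v)
  have hc := (NormedSpace.exp_series_hasSum_exp' (𝕂 := ℂ) c).smul_const v
  simp only [ContinuousLinearMap.apply_apply, smul_apply, hpow] at hA
  simp only [smul_eq_mul, mul_smul] at hc
  rw [Complex.exp_eq_exp_ℂ]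
  exact hA.unique hc

section TwoProjections

variable {E : Type*} [NormedAddCommGroup E] [InnerProductSpace ℂ E]
  {x ψ : E} {a : ℝ} {H : E →L[ℂ] E}

theorem apply_add_eq_smul_of_sum_proj (hx : ‖x‖ = 1) (hψ : ‖ψ‖ = 1) (hxψ : ⟪x, ψ⟫_ℂ = a)
    (hH : ∀ v, H v = ⟪x, v⟫_ℂ • x + ⟪ψ, v⟫_ℂ • ψ) :
    H (ψ + x) = (1 + a : ℂ) • (ψ + x) := by
  have hψx : ⟪ψ, x⟫_ℂ = a := by rw [← inner_conj_symm, hxψ, conj_ofReal]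
  rw [hH, inner_add_right, inner_add_right, hxψ, hψx, inner_self_eq_one_of_norm_eq_one hx,
    inner_self_eq_one_of_norm_eq_one hψ]
  module

theorem apply_sub_eq_smul_of_sum_proj (hx : ‖x‖ = 1) (hψ : ‖ψ‖ = 1) (hxψ : ⟪x, ψ⟫_ℂ = a)
    (hH : ∀ v, H v = ⟪x, v⟫_ℂ • x + ⟪ψ, v⟫_ℂ • ψ) :
    H (ψ - x) = (1 - a : ℂ) • (ψ - x) := by
  have hψx : ⟪ψ, x⟫_ℂ = a := by rw [← inner_conj_symm, hxψ, conj_ofReal]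
  rw [hH, inner_sub_right, inner_sub_right, hxψ, hψx, inner_self_eq_one_of_norm_eq_one hx,
    inner_self_eq_one_of_norm_eq_one hψ]
  module

theorem exp_neg_I_mul_one_add (t a : ℝ) :
    Complex.exp (-(I * t) * (1 + a))
      = Complex.exp (-(I * t)) * (Real.cos (a * t) - Real.sin (a * t) * I) := by
  rw [show -(I * t) * (1 + a) = -(I * t) + (-(a * t) : ℝ) * I by push_cast; ring,
    Complex.exp_add, Complex.exp_mul_I]
  push_cast [Complex.cos_neg, Complex.sin_neg]
  ring

theorem exp_neg_I_mul_one_sub (t a : ℝ) :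
    Complex.exp (-(I * t) * (1 - a))
      = Complex.exp (-(I * t)) * (Real.cos (a * t) + Real.sin (a * t) * I) := by
  rw [show -(I * t) * (1 - a) = -(I * t) + (a * t : ℝ) * I by push_cast; ring,
    Complex.exp_add, Complex.exp_mul_I]
  push_cast
  ring

theorem exp_smul_apply_of_sum_proj [CompleteSpace E] (hx : ‖x‖ = 1) (hψ : ‖ψ‖ = 1)
    (hxψ : ⟪x, ψ⟫_ℂ = a) (hH : ∀ v, H v = ⟪x, v⟫_ℂ • x + ⟪ψ, v⟫_ℂ • ψ) (t : ℝ) :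
    NormedSpace.exp ((-(I * t)) • H) ψ
      = Complex.exp (-(I * t)) • ((Real.cos (a * t) : ℂ) • ψ - (I * Real.sin (a * t)) • x) := by
  have hplus : NormedSpace.exp ((-(I * t)) • H) (ψ + x)
      = Complex.exp (-(I * t) * (1 + a)) • (ψ + x) :=
    NormedSpace.exp_apply_of_apply_eq_smul <| by
      rw [smul_apply, apply_add_eq_smul_of_sum_proj hx hψ hxψ hH, smul_smul]
  have hminus : NormedSpace.exp ((-(I * t)) • H) (ψ - x)
      = Complex.exp (-(I * t) * (1 - a)) • (ψ - x) :=
    NormedSpace.exp_apply_of_apply_eq_smul <| by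
      rw [smul_apply, apply_sub_eq_smul_of_sum_proj hx hψ hxψ hH, smul_smul]
  have hsplit : ψ = (1 / 2 : ℂ) • (ψ + x) + (1 / 2 : ℂ) • (ψ - x) := by module
  rw [hsplit, map_add, map_smul, map_smul, hplus, hminus, exp_neg_I_mul_one_add,
    exp_neg_I_mul_one_sub]
  module

end TwoProjections

/-- Grover search as quantum simulation: with H = |x⟩⟨x| + |ψ⟩⟨ψ| for
|ψ⟩ = α|x⟩ + β|y⟩ (α,β real, α²+β²=1, α≠0, x⊥y unit vectors), the evolution is
exp(-iHt)|ψ⟩ = e^{-it}(cos(αt)|ψ⟩ - i sin(αt)|x⟩); at t = π/(2α) the state is,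
up to global phase, |x⟩. -/
theorem grover_hamiltonian_evolution
    (x y : EuclideanSpace ℂ (Fin 2)) (hx : ‖x‖ = 1) (hy : ‖y‖ = 1)
    (hxy : ⟪x, y⟫_ℂ = 0)
    (α β : ℝ) (hαβ : α ^ 2 + β ^ 2 = 1) (hα : α ≠ 0)
    (ψ : EuclideanSpace ℂ (Fin 2)) (hψ : ψ = (α : ℂ) • x + (β : ℂ) • y)
    (H : EuclideanSpace ℂ (Fin 2) →L[ℂ] EuclideanSpace ℂ (Fin 2))
    (hH : ∀ v, H v = ⟪x, v⟫_ℂ • x + ⟪ψ, v⟫_ℂ • ψ) :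
    (∀ t : ℝ, (NormedSpace.exp ((-(Complex.I * t)) • H)) ψ
        = Complex.exp (-(Complex.I * t)) •
            ((Real.cos (α * t) : ℂ) • ψ - (Complex.I * Real.sin (α * t)) • x)) ∧
    ∃ c : ℂ, ‖c‖ = 1 ∧
      (NormedSpace.exp ((-(Complex.I * (Real.pi / (2 * α)))) • H)) ψ = c • x := by
  have hψ_norm : ‖ψ‖ = 1 := by
    have hinner : ⟪(α : ℂ) • x, (β : ℂ) • y⟫_ℂ = 0 := by
      rw [inner_smul_left, inner_smul_right, hxy, mul_zero, mul_zero]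
    rw [← pow_eq_one_iff_of_nonneg (norm_nonneg ψ) two_ne_zero, sq, hψ,
      norm_add_sq_eq_norm_sq_add_norm_sq_of_inner_eq_zero _ _ hinner, norm_smul, norm_smul, hx, hy]
    simpa [sq] using hαβ
  have hxψ : ⟪x, ψ⟫_ℂ = α := by
    rw [hψ, inner_add_right, inner_smul_right, inner_smul_right, hxy,
      inner_self_eq_one_of_norm_eq_one hx]
    ring
  have hevol := exp_smul_apply_of_sum_proj hx hψ_norm hxψ hH
  have hT : (Real.pi : ℂ) / (2 * α) = (Real.pi / (2 * α) : ℝ) := by push_cast; rfl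
  rw [hT]
  refine ⟨hevol, Complex.exp (-(I * (Real.pi / (2 * α) : ℝ))) * -I, ?_, ?_⟩
  · simp [Complex.norm_exp, -Complex.ofReal_div]
  · rw [hevol, show α * (Real.pi / (2 * α)) = Real.pi / 2 by field_simp,
      Real.cos_pi_div_two, Real.sin_pi_div_two]
    push_cast
    module
end
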